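/- Let λ be a Young diagram, let x_1 < ⋯ < x_d be the contents of its addable boxes and y_1 < ⋯ < y_{d-1} the contents of its removable boxes. Then the pair has zero center, ∑_{k=1}^{d} x_k − ∑_{k=1}^{d-1} y_k = 0, and its area equals the number of boxes of λ: ∑_{1 ≤ i < j ≤ d} (y_i − x_i)(x_j − y_{j-1}) = |λ|. -/

import Mathlib

/-- A box `c ∉ μ` is addable if adjoining it to `μ` gives a Young diagram. -/
def Addable (μ : YoungDiagram) (c : ℕ × ℕ) : Prop :=
  c ∉ μ.cells ∧ ∃ ν : YoungDiagram, ν.cells = insert c μ.cells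

/-- A box `c ∈ μ` is removable if deleting it from `μ` leaves a Young diagram. -/
def Removable (μ : YoungDiagram) (c : ℕ × ℕ) : Prop :=
  c ∈ μ.cells ∧ ∃ ν : YoungDiagram, ν.cells = μ.cells.erase c

/-- The content `c(b) = j − i` of a box `b = (i,j)`, as a real number (0-indexed). -/
noncomputable def contentBox (b : ℕ × ℕ) : ℝ := (b.2 : ℝ) - (b.1 : ℝ)

/-!
Write `λᵢ` for the row lengths and `rᵢ = λᵢ - i` for the content of the box just past the end of
row `i`. The addable boxes are `(i, λᵢ)` for `i = 0` or `λᵢ < λᵢ₋₁`, the removable ones are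
`(i, λᵢ - 1)` for `λᵢ₊₁ < λᵢ`; so the addable rows other than `0` are the successors of the
removable rows, and a non-removable row `i` has `rᵢ₊₁ = rᵢ - 1`. Hence for every `f`,
`∑ f(xₖ) - ∑ f(yₖ) = f(r₀) + ∑_{i < ℓ(λ)} (f(rᵢ₊₁) - f(rᵢ - 1))`, which telescopes to `0` for
`f = id` and to `2|λ|` for `f = t²`. The theorem follows from the identity
`2 · area = (∑ xₖ² - ∑ yₖ²) - (∑ xₖ - ∑ yₖ)²`, valid for any two sequences.
-/

open Finset

theorem Finset.sum_comp_eq_of_image_eq {ι κ β M : Type*} [DecidableEq β] [AddCommMonoid M]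
    {s : Finset ι} {t : Finset κ} {u : ι → β} {v : κ → β} (hu : Set.InjOn u s)
    (hv : Set.InjOn v t) (h : s.image u = t.image v) (f : β → M) :
    ∑ i ∈ s, f (u i) = ∑ j ∈ t, f (v j) := by
  rw [← sum_image hu, ← sum_image hv, h]

theorem two_mul_area_eq_sub_sq_center (x y : ℕ → ℝ) (d : ℕ) :
    2 * ∑ i ∈ Icc 1 d, ∑ j ∈ Icc (i + 1) d, (y i - x i) * (x j - y (j - 1)) =
      (∑ k ∈ Icc 1 d, x k ^ 2 - ∑ k ∈ Icc 1 (d - 1), y k ^ 2) -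
        (∑ k ∈ Icc 1 d, x k - ∑ k ∈ Icc 1 (d - 1), y k) ^ 2 := by
  rcases d with _ | n
  · simp
  induction n with
  | zero => simp
  | succ n ih =>
    simp only [Nat.add_sub_cancel] at ih ⊢
    have hinner : ∀ i ∈ Icc 1 (n + 1),
        ∑ j ∈ Icc (i + 1) (n + 1 + 1), (y i - x i) * (x j - y (j - 1)) =
          ∑ j ∈ Icc (i + 1) (n + 1), (y i - x i) * (x j - y (j - 1)) +
            (y i - x i) * (x (n + 2) - y (n + 1)) :=
      fun i hi => sum_Icc_succ_top (by simp only [mem_Icc] at hi; omega) _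
    have houter : ∑ i ∈ Icc 1 (n + 1 + 1), ∑ j ∈ Icc (i + 1) (n + 1 + 1),
        (y i - x i) * (x j - y (j - 1)) =
          ∑ i ∈ Icc 1 (n + 1), ∑ j ∈ Icc (i + 1) (n + 1), (y i - x i) * (x j - y (j - 1)) +
            (∑ i ∈ Icc 1 (n + 1), (y i - x i)) * (x (n + 2) - y (n + 1)) := by
      rw [sum_Icc_succ_top (Nat.le_add_left 1 (n + 1)), sum_congr rfl hinner,
        Icc_eq_empty_of_lt (Nat.lt_succ_self _), sum_empty, add_zero, sum_add_distrib, sum_mul]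
    rw [houter, mul_add, ih, sum_sub_distrib, sum_Icc_succ_top (Nat.le_add_left 1 (n + 1)) x,
      sum_Icc_succ_top (Nat.le_add_left 1 (n + 1)) (x · ^ 2),
      sum_Icc_succ_top (Nat.le_add_left 1 n) y, sum_Icc_succ_top (Nat.le_add_left 1 n) (y · ^ 2)]
    ring

section Interlacing

variable {d : ℕ} {x y : ℕ → ℝ}

theorem strictMonoOn_of_interlace_left
    (hinter : ∀ m, 1 ≤ m → m ≤ d - 1 → x m < y m ∧ y m < x (m + 1)) :
    StrictMonoOn x (Set.Icc 1 d) :=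
  strictMonoOn_of_lt_add_one Set.ordConnected_Icc fun m _ hm hm1 =>
    have h := hinter m hm.1 (by simp only [Set.mem_Icc] at hm1; omega)
    h.1.trans h.2

theorem strictMonoOn_of_interlace_right
    (hinter : ∀ m, 1 ≤ m → m ≤ d - 1 → x m < y m ∧ y m < x (m + 1)) :
    StrictMonoOn y (Set.Icc 1 (d - 1)) :=
  strictMonoOn_of_lt_add_one Set.ordConnected_Icc fun m _ hm hm1 =>
    (hinter m hm.1 hm.2).2.trans (hinter (m + 1) hm1.1 hm1.2).1

end Interlacing

namespace YoungDiagram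

variable {μ : YoungDiagram}

theorem addable_mk_iff {i j : ℕ} :
    Addable μ (i, j) ↔ j = μ.rowLen i ∧ (i = 0 ∨ μ.rowLen i < μ.rowLen (i - 1)) := by
  constructor
  · rintro ⟨hij, ν, hν⟩
    have mem_ν : ∀ {p}, p ∈ ν ↔ p = (i, j) ∨ p ∈ μ := by
      intro p; rw [← mem_cells, hν, Finset.mem_insert, mem_cells]
    have hijν : (i, j) ∈ ν := mem_ν.2 (Or.inl rfl)
    rw [mem_cells, mem_iff_lt_rowLen, not_lt] at hij
    have hj : j = μ.rowLen i := by
      by_contra hne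
      have := mem_ν.1 (ν.up_left_mem le_rfl hij hijν)
      simp only [Prod.mk.injEq, true_and, mem_iff_lt_rowLen, lt_self_iff_false, or_false] at this
      omega
    refine ⟨hj, or_iff_not_imp_left.2 fun hi => ?_⟩
    have := mem_ν.1 (ν.up_left_mem (Nat.sub_le i 1) le_rfl hijν)
    simp only [Prod.mk.injEq, and_true, mem_iff_lt_rowLen] at this
    omega
  · rintro ⟨rfl, hi⟩
    refine ⟨by simp [mem_iff_lt_rowLen], ⟨insert (i, μ.rowLen i) μ.cells, ?_⟩, rfl⟩
    rintro ⟨a, b⟩ ⟨c, e⟩ hle hab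
    simp only [Finset.coe_insert, Set.mem_insert_iff, Finset.mem_coe, mem_cells,
      mem_iff_lt_rowLen, Prod.mk.injEq, Prod.mk_le_mk] at hle hab ⊢
    have hca := μ.rowLen_anti c a hle.1
    rcases hab with ⟨rfl, rfl⟩ | hab
    · rcases hle.1.lt_or_eq with hci | rfl
      · have := μ.rowLen_anti c (a - 1) (by omega)
        omega
      · omega
    · omega

theorem removable_mk_iff {i j : ℕ} :
    Removable μ (i, j) ↔ j + 1 = μ.rowLen i ∧ μ.rowLen (i + 1) < μ.rowLen i := by
  constructor
  · rintro ⟨hij, ν, hν⟩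
    have mem_ν : ∀ {p}, p ∈ ν ↔ p ≠ (i, j) ∧ p ∈ μ := by
      intro p; rw [← mem_cells, hν, Finset.mem_erase, mem_cells]
    have hijν : (i, j) ∉ ν := fun h => (mem_ν.1 h).1 rfl
    rw [mem_cells, mem_iff_lt_rowLen] at hij
    constructor
    · by_contra hne
      exact hijν <| ν.up_left_mem le_rfl (Nat.le_succ j) <|
        mem_ν.2 ⟨by simp, mem_iff_lt_rowLen.2 (by omega)⟩
    · by_contra hle
      have := μ.rowLen_anti i (i + 1) (Nat.le_add_right i 1)
      exact hijν <| ν.up_left_mem (Nat.le_add_right i 1) le_rfl <|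
        mem_ν.2 ⟨by simp, mem_iff_lt_rowLen.2 (by omega)⟩
  · rintro ⟨hj, hi⟩
    have hij : (i, j) ∈ μ.cells := by rw [mem_cells, mem_iff_lt_rowLen]; omega
    refine ⟨hij, ⟨μ.cells.erase (i, j), ?_⟩, rfl⟩
    rw [Finset.coe_erase]
    refine μ.isLowerSet.erase fun ⟨a, b⟩ hab hle => ?_
    simp only [Finset.mem_coe, mem_cells, mem_iff_lt_rowLen, Prod.mk_le_mk] at hab hle
    rcases hle.1.lt_or_eq with hia | rfl
    · have := μ.rowLen_anti (i + 1) a hia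
      omega
    · rw [Prod.mk.injEq]
      omega

theorem rowLen_colLen_zero (μ : YoungDiagram) : μ.rowLen (μ.colLen 0) = 0 := by
  by_contra h
  exact (μ.colLen 0).lt_irrefl (mem_iff_lt_colLen.1 (mem_iff_lt_rowLen.2 (Nat.pos_of_ne_zero h)))

theorem card_eq_sum_rowLen (μ : YoungDiagram) :
    μ.card = ∑ i ∈ range (μ.colLen 0), μ.rowLen i := by
  rw [YoungDiagram.card, card_eq_sum_card_fiberwise (f := Prod.fst)]
  · simp only [rowLen_eq_card]
    rfl
  · rintro ⟨i, j⟩ hij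
    exact mem_range.2 (mem_iff_lt_colLen.1 (μ.up_left_mem le_rfl (Nat.zero_le j) hij))

noncomputable def rowEndContent (μ : YoungDiagram) (i : ℕ) : ℝ := contentBox (i, μ.rowLen i)

theorem rowEndContent_strictAnti (μ : YoungDiagram) : StrictAnti μ.rowEndContent := by
  intro a b hab
  have hlen : (μ.rowLen b : ℝ) ≤ μ.rowLen a := by exact_mod_cast μ.rowLen_anti a b hab.le
  have hab' : (a : ℝ) < b := by exact_mod_cast hab
  simp only [rowEndContent, contentBox]
  linarith

def addableRows (μ : YoungDiagram) : Finset ℕ :=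
  (range (μ.colLen 0 + 1)).filter fun i => i = 0 ∨ μ.rowLen i < μ.rowLen (i - 1)

def removableRows (μ : YoungDiagram) : Finset ℕ :=
  (range (μ.colLen 0)).filter fun i => μ.rowLen (i + 1) < μ.rowLen i

theorem mem_image_addableRows_iff {t : ℝ} :
    t ∈ μ.addableRows.image μ.rowEndContent ↔ ∃ c, Addable μ c ∧ contentBox c = t := by
  simp only [mem_image, addableRows, mem_filter, mem_range]
  constructor
  · rintro ⟨i, ⟨-, hi⟩, rfl⟩
    exact ⟨_, addable_mk_iff.2 ⟨rfl, hi⟩, rfl⟩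
  · rintro ⟨⟨i, j⟩, hc, rfl⟩
    obtain ⟨rfl, hi⟩ := addable_mk_iff.1 hc
    refine ⟨i, ⟨?_, hi⟩, rfl⟩
    by_contra h
    have := μ.rowLen_anti (μ.colLen 0) (i - 1) (by omega)
    have := μ.rowLen_colLen_zero
    omega

theorem mem_image_removableRows_iff {t : ℝ} :
    t ∈ μ.removableRows.image (μ.rowEndContent · - 1) ↔
      ∃ c, Removable μ c ∧ contentBox c = t := by
  simp only [mem_image, removableRows, mem_filter, mem_range]
  constructor
  · rintro ⟨i, ⟨-, hi⟩, rfl⟩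
    refine ⟨(i, μ.rowLen i - 1), removable_mk_iff.2 ⟨by omega, hi⟩, ?_⟩
    simp only [rowEndContent, contentBox, Nat.cast_sub (by omega : 1 ≤ μ.rowLen i), Nat.cast_one]
    ring
  · rintro ⟨⟨i, j⟩, hc, rfl⟩
    obtain ⟨hj, hi⟩ := removable_mk_iff.1 hc
    refine ⟨i, ⟨?_, hi⟩, ?_⟩
    · by_contra h
      have := μ.rowLen_anti (μ.colLen 0) i (by omega)
      have := μ.rowLen_colLen_zero
      omega
    · simp only [rowEndContent, contentBox, ← hj, Nat.cast_add, Nat.cast_one]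
      ring

theorem addableRows_eq_insert_image_removableRows :
    μ.addableRows = insert 0 (μ.removableRows.image (· + 1)) := by
  ext (_ | i) <;> simp [addableRows, removableRows]

theorem sum_addableRows_sub_sum_removableRows (f : ℝ → ℝ) :
    ∑ i ∈ μ.addableRows, f (μ.rowEndContent i) -
        ∑ i ∈ μ.removableRows, f (μ.rowEndContent i - 1) =
      f (μ.rowEndContent 0) +
        ∑ i ∈ range (μ.colLen 0), (f (μ.rowEndContent (i + 1)) - f (μ.rowEndContent i - 1)) := by
  have hrest : ∑ i ∈ μ.removableRows, (f (μ.rowEndContent (i + 1)) - f (μ.rowEndContent i - 1)) =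
      ∑ i ∈ range (μ.colLen 0), (f (μ.rowEndContent (i + 1)) - f (μ.rowEndContent i - 1)) := by
    refine sum_subset (filter_subset _ _) fun i hi hnot => ?_
    have hlen : μ.rowLen (i + 1) = μ.rowLen i := by
      have := μ.rowLen_anti i (i + 1) (Nat.le_add_right i 1)
      simp only [removableRows, mem_filter, hi, true_and, not_lt] at hnot
      omega
    simp only [rowEndContent, contentBox, hlen, Nat.cast_add, Nat.cast_one]
    ring_nf
  rw [addableRows_eq_insert_image_removableRows, sum_insert (by simp),
    sum_image (add_left_injective 1).injOn, ← hrest, sum_sub_distrib]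
  ring

theorem sum_addableRows_sub_sum_removableRows_eq_zero :
    ∑ i ∈ μ.addableRows, μ.rowEndContent i -
      ∑ i ∈ μ.removableRows, (μ.rowEndContent i - 1) = 0 := by
  have hterm : ∀ i, μ.rowEndContent (i + 1) - (μ.rowEndContent i - 1) =
      (μ.rowEndContent (i + 1) - μ.rowEndContent i) + 1 := fun i => by ring
  refine (sum_addableRows_sub_sum_removableRows id).trans ?_
  simp only [id, hterm, sum_add_distrib, sum_range_sub, sum_const, card_range, nsmul_eq_mul,
    mul_one]
  simp only [rowEndContent, contentBox, rowLen_colLen_zero, Nat.cast_zero]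
  ring

theorem sum_sq_addableRows_sub_sum_sq_removableRows :
    ∑ i ∈ μ.addableRows, μ.rowEndContent i ^ 2 -
      ∑ i ∈ μ.removableRows, (μ.rowEndContent i - 1) ^ 2 = 2 * μ.card := by
  have hterm : ∀ i : ℕ, μ.rowEndContent (i + 1) ^ 2 - (μ.rowEndContent i - 1) ^ 2 =
      ((μ.rowEndContent (i + 1) ^ 2 - ((i + 1 : ℕ) : ℝ) ^ 2) -
        (μ.rowEndContent i ^ 2 - (i : ℝ) ^ 2)) + 2 * μ.rowLen i := fun i => by
    simp only [rowEndContent, contentBox]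
    push_cast
    ring
  rw [sum_addableRows_sub_sum_removableRows (· ^ 2)]
  simp only [hterm, sum_add_distrib, ← mul_sum,
    sum_range_sub (fun i => μ.rowEndContent i ^ 2 - (i : ℝ) ^ 2)]
  rw [card_eq_sum_rowLen, Nat.cast_sum]
  simp only [rowEndContent, contentBox, rowLen_colLen_zero, Nat.cast_zero]
  ring

theorem image_Icc_eq_image_addableRows {d : ℕ} {x : ℕ → ℝ}
    (hx1 : ∀ m, 1 ≤ m → m ≤ d → ∃ c, Addable μ c ∧ contentBox c = x m)
    (hx2 : ∀ c, Addable μ c → ∃ m, 1 ≤ m ∧ m ≤ d ∧ contentBox c = x m) :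
    (Icc 1 d).image x = μ.addableRows.image μ.rowEndContent := by
  ext t
  rw [mem_image_addableRows_iff, mem_image]
  constructor
  · rintro ⟨m, hm, rfl⟩
    exact hx1 m (mem_Icc.1 hm).1 (mem_Icc.1 hm).2
  · rintro ⟨c, hc, rfl⟩
    obtain ⟨m, h1, h2, hm⟩ := hx2 c hc
    exact ⟨m, mem_Icc.2 ⟨h1, h2⟩, hm.symm⟩

theorem image_Icc_eq_image_removableRows {e : ℕ} {y : ℕ → ℝ}
    (hy1 : ∀ m, 1 ≤ m → m ≤ e → ∃ c, Removable μ c ∧ contentBox c = y m)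
    (hy2 : ∀ c, Removable μ c → ∃ m, 1 ≤ m ∧ m ≤ e ∧ contentBox c = y m) :
    (Icc 1 e).image y = μ.removableRows.image (μ.rowEndContent · - 1) := by
  ext t
  rw [mem_image_removableRows_iff, mem_image]
  constructor
  · rintro ⟨m, hm, rfl⟩
    exact hy1 m (mem_Icc.1 hm).1 (mem_Icc.1 hm).2
  · rintro ⟨c, hc, rfl⟩
    obtain ⟨m, h1, h2, hm⟩ := hy2 c hc
    exact ⟨m, mem_Icc.2 ⟨h1, h2⟩, hm.symm⟩

end YoungDiagram

theorem young_diagram_center_zero_area_card_general (lam : YoungDiagram)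
    (d : ℕ) (x y : ℕ → ℝ)
    -- the sequences interlace: x₁ < y₁ < x₂ < ⋯ < y_{d-1} < x_d
    (hinter : ∀ m, 1 ≤ m → m ≤ d - 1 → x m < y m ∧ y m < x (m + 1))
    -- x₁,…,x_d are exactly the contents of the addable boxes of λ
    (hx1 : ∀ m, 1 ≤ m → m ≤ d → ∃ c, Addable lam c ∧ contentBox c = x m)
    (hx2 : ∀ c, Addable lam c → ∃ m, 1 ≤ m ∧ m ≤ d ∧ contentBox c = x m)
    -- y₁,…,y_{d-1} are exactly the contents of the removable boxes of λ
    (hy1 : ∀ m, 1 ≤ m → m ≤ d - 1 → ∃ c, Removable lam c ∧ contentBox c = y m)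
    (hy2 : ∀ c, Removable lam c → ∃ m, 1 ≤ m ∧ m ≤ d - 1 ∧ contentBox c = y m) :
    (∑ k ∈ Finset.Icc 1 d, x k - ∑ k ∈ Finset.Icc 1 (d - 1), y k = 0) ∧
    (∑ i ∈ Finset.Icc 1 d, ∑ j ∈ Finset.Icc (i + 1) d, (y i - x i) * (x j - y (j - 1)) =
      (lam.card : ℝ)) := by
  have hsum (f : ℝ → ℝ) :
      ∑ k ∈ Icc 1 d, f (x k) - ∑ k ∈ Icc 1 (d - 1), f (y k) =
        ∑ i ∈ lam.addableRows, f (lam.rowEndContent i) -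
          ∑ i ∈ lam.removableRows, f (lam.rowEndContent i - 1) := by
    rw [sum_comp_eq_of_image_eq ((strictMonoOn_of_interlace_left hinter).injOn.mono
        (coe_Icc 1 d).subset) lam.rowEndContent_strictAnti.injective.injOn
        (YoungDiagram.image_Icc_eq_image_addableRows hx1 hx2) f,
      sum_comp_eq_of_image_eq ((strictMonoOn_of_interlace_right hinter).injOn.mono
        (coe_Icc 1 (d - 1)).subset)
        (fun _ _ _ _ h => lam.rowEndContent_strictAnti.injective (sub_left_injective h))
        (YoungDiagram.image_Icc_eq_image_removableRows hy1 hy2) f]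
  have hcenter : ∑ k ∈ Icc 1 d, x k - ∑ k ∈ Icc 1 (d - 1), y k = 0 :=
    (hsum id).trans lam.sum_addableRows_sub_sum_removableRows_eq_zero
  have hsq := (hsum (· ^ 2)).trans lam.sum_sq_addableRows_sub_sum_sq_removableRows
  refine ⟨hcenter, ?_⟩
  have harea := two_mul_area_eq_sub_sq_center x y d
  rw [hcenter, hsq] at harea
  linarith

/-- For a Young diagram `λ` with addable contents `x₁ < ⋯ < x_d` and removable contents
`y₁ < ⋯ < y_{d−1}`: the pair has zero center, `∑ x_k − ∑ y_k = 0`, and its area equals the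
number of boxes: `∑_{1≤i<j≤d} (y_i − x_i)(x_j − y_{j-1}) = |λ|`. -/
theorem young_diagram_center_zero_area_card (lam : YoungDiagram)
    (d : ℕ) (hd : 1 ≤ d) (x y : ℕ → ℝ)
    -- the sequences interlace: x₁ < y₁ < x₂ < ⋯ < y_{d-1} < x_d
    (hinter : ∀ m, 1 ≤ m → m ≤ d - 1 → x m < y m ∧ y m < x (m + 1))
    -- x₁,…,x_d are exactly the contents of the addable boxes of λ
    (hx1 : ∀ m, 1 ≤ m → m ≤ d → ∃ c, Addable lam c ∧ contentBox c = x m)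
    (hx2 : ∀ c, Addable lam c → ∃ m, 1 ≤ m ∧ m ≤ d ∧ contentBox c = x m)
    -- y₁,…,y_{d-1} are exactly the contents of the removable boxes of λ
    (hy1 : ∀ m, 1 ≤ m → m ≤ d - 1 → ∃ c, Removable lam c ∧ contentBox c = y m)
    (hy2 : ∀ c, Removable lam c → ∃ m, 1 ≤ m ∧ m ≤ d - 1 ∧ contentBox c = y m) :
    (∑ k ∈ Finset.Icc 1 d, x k - ∑ k ∈ Finset.Icc 1 (d - 1), y k = 0) ∧
    (∑ i ∈ Finset.Icc 1 d, ∑ j ∈ Finset.Icc (i + 1) d, (y i - x i) * (x j - y (j - 1)) =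
      (lam.card : ℝ)) :=
  young_diagram_center_zero_area_card_general lam d x y hinter hx1 hx2 hy1 hy2
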